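/- arXiv:2110.07648 — 3 statements merged into one kernel-verified Lean document; each statement's English description precedes it below -/
import Mathlib

section
/- For every ε > 0 there exists n0 ∈ ℕ such that for all integers n ≥ n0, the poset Ramsey number satisfies R(Λ, Q_n) ≤ n + (1+ε)·(n / log n). -/
/-- The three-element poset `Λ` with elements `Z1, Z2, Z3` where `Z1 < Z3`, `Z2 < Z3`,
and `Z1`, `Z2` incomparable. (The poset `V` is its order dual `Lamᵒᵈ`.) -/
inductive Lam : Type where
  | Z1 : Lam
  | Z2 : Lam
  | Z3 : Lam
  deriving DecidableEq

/-- The order relation of `Λ` as a Boolean-valued function. -/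
def Lam.ble : Lam → Lam → Bool
  | .Z1, .Z1 => true
  | .Z2, .Z2 => true
  | .Z1, .Z3 => true
  | .Z2, .Z3 => true
  | .Z3, .Z3 => true
  | _, _ => false

instance : PartialOrder Lam where
  le a b := Lam.ble a b = true
  le_refl a := by cases a <;> rfl
  le_trans a b c hab hbc := by
    cases a <;> cases b <;> cases c <;> simp_all [Lam.ble]
  le_antisymm a b hab hba := by
    cases a <;> cases b <;> simp_all [Lam.ble]

/-- `P'` contains a copy of `P`: there is an injective map `f : P → P'` such that
`x ≤ y` iff `f x ≤ f y`. -/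
def ContainsCopy (P P' : Type*) [PartialOrder P] [PartialOrder P'] : Prop :=
  ∃ f : P → P', Function.Injective f ∧ ∀ x y : P, x ≤ y ↔ f x ≤ f y

/-- The blue/red colored Boolean lattice `Q_N` (with coloring `c`, blue = `true`,
red = `false`) contains a blue copy of the poset `P`. -/
def HasBlueCopy (P : Type*) [PartialOrder P] {N : ℕ} (c : Finset (Fin N) → Bool) : Prop :=
  ∃ f : P → Finset (Fin N), Function.Injective f ∧
    (∀ x y : P, x ≤ y ↔ f x ⊆ f y) ∧ ∀ x : P, c (f x) = true

/-- The blue/red colored Boolean lattice `Q_N` contains a red copy of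
the Boolean lattice `Q_n`. -/
def HasRedCube (n : ℕ) {N : ℕ} (c : Finset (Fin N) → Bool) : Prop :=
  ∃ f : Finset (Fin n) → Finset (Fin N), Function.Injective f ∧
    (∀ A B : Finset (Fin n), A ⊆ B ↔ f A ⊆ f B) ∧ ∀ A : Finset (Fin n), c (f A) = false

/-- The poset Ramsey number `R(P, Q_n)`: the least `N` such that every blue/red coloring
of `Q_N` contains a blue copy of `P` or a red copy of `Q_n`. -/
noncomputable def posetRamsey (P : Type*) [PartialOrder P] (n : ℕ) : ℕ :=
  sInf {N : ℕ | ∀ c : Finset (Fin N) → Bool, HasBlueCopy P c ∨ HasRedCube n c}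

/-! Take `k` with `2 ^ n < k!` and split the ground set of `Q_{n+k}` as `[n] ⊔ [k]`. A
permutation `σ` of `[k]` gives a maximal chain `C_σ 0 ⊂ ⋯ ⊂ C_σ k` in `Q([k])`. Without a blue
`Λ`, the blue sets below a blue set form a chain; so if for some `T ⊆ [n]` the set `T ∪ [k]` is
blue and every level `i` carries a blue set `X ∪ C_σ i` with `X ⊆ T` (a blue transversal), then
`T` determines `σ`. As `k! > 2 ^ n`, some `σ` has no blue transversal, and for it
`T ↦ T ∪ C_σ (h T)`, with `h T` the first level not reached below `T`, is a red copy of `Q_n`.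
Finally `k = ⌈(1 + ε / 2) n / log n⌉` works for large `n`, as `ln k! ≥ k (ln k - 1)` and
`ln ln n = o(ln n)`. -/

open Finset
open scoped Nat

lemma Lam.le_iff {a b : Lam} : a ≤ b ↔ Lam.ble a b = true := Iff.rfl

lemma hasBlueCopy_lam_of_not_subset {N : ℕ} {c : Finset (Fin N) → Bool} {X Y Z : Finset (Fin N)}
    (hX : c X = true) (hY : c Y = true) (hZ : c Z = true) (hXZ : X ⊆ Z) (hYZ : Y ⊆ Z)
    (hXY : ¬ X ⊆ Y) (hYX : ¬ Y ⊆ X) : HasBlueCopy Lam c := by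
  let f : Lam → Finset (Fin N)
    | .Z1 => X
    | .Z2 => Y
    | .Z3 => Z
  have hf : ∀ a b : Lam, a ≤ b ↔ f a ⊆ f b := by
    have hZX : ¬ Z ⊆ X := fun h => hYX (hYZ.trans h)
    have hZY : ¬ Z ⊆ Y := fun h => hXY (hXZ.trans h)
    intro a b
    cases a <;> cases b <;> simp [f, Lam.le_iff, Lam.ble, *]
  refine ⟨f, fun a b hab => le_antisymm ((hf a b).2 hab.le) ((hf b a).2 hab.ge), hf, ?_⟩
  intro a
  cases a <;> assumption

def IsBlueLambdaFree {β : Type*} (c : Finset β → Bool) : Prop :=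
  ∀ X Y Z, c X = true → c Y = true → c Z = true → X ⊆ Z → Y ⊆ Z → X ⊆ Y ∨ Y ⊆ X

lemma isBlueLambdaFree_of_not_hasBlueCopy {N : ℕ} {c : Finset (Fin N) → Bool}
    (hc : ¬ HasBlueCopy Lam c) : IsBlueLambdaFree c := by
  intro X Y Z hX hY hZ hXZ hYZ
  by_contra! h
  exact hc (hasBlueCopy_lam_of_not_subset hX hY hZ hXZ hYZ h.1 h.2)

lemma IsBlueLambdaFree.comp {β γ : Type*} {c : Finset γ → Bool} (hc : IsBlueLambdaFree c)
    (e : Finset β ↪o Finset γ) : IsBlueLambdaFree (c ∘ e) := fun X Y Z hX hY hZ hXZ hYZ => by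
  simpa only [← e.le_iff_le] using hc _ _ _ hX hY hZ (e.monotone hXZ) (e.monotone hYZ)

theorem Finset.disjSum_subset_disjSum_iff {α β : Type*} {s₁ s₂ : Finset α} {t₁ t₂ : Finset β} :
    s₁.disjSum t₁ ⊆ s₂.disjSum t₂ ↔ s₁ ⊆ s₂ ∧ t₁ ⊆ t₂ :=
  ⟨fun h => ⟨fun a ha => by simpa using h (inl_mem_disjSum.2 ha),
    fun b hb => by simpa using h (inr_mem_disjSum.2 hb)⟩, fun h => disjSum_mono h.1 h.2⟩

section PermChain

variable {k : ℕ}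

def permChain (σ : Equiv.Perm (Fin k)) (i : ℕ) : Finset (Fin k) :=
  ({m | (m : ℕ) < i} : Finset (Fin k)).map σ.toEmbedding

lemma card_permChain (σ : Equiv.Perm (Fin k)) (i : ℕ) :
    #(permChain σ i) = #({m | (m : ℕ) < i} : Finset (Fin k)) :=
  card_map _

lemma permChain_mono (σ : Equiv.Perm (Fin k)) : Monotone (permChain σ) :=
  fun _ _ hij => map_subset_map.2 (monotone_filter_right _ fun _ _ hm => lt_of_lt_of_le hm hij)

lemma permChain_self (σ : Equiv.Perm (Fin k)) : permChain σ k = univ := by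
  simp [permChain]

lemma permChain_succ_sdiff (σ : Equiv.Perm (Fin k)) (m : Fin k) :
    permChain σ (m + 1) \ permChain σ m = {σ m} := by
  ext x
  obtain ⟨x, rfl⟩ := σ.surjective x
  simp only [permChain, mem_sdiff, mem_map_mk, mem_filter, mem_univ, true_and, not_lt,
    Order.lt_add_one_iff, Fin.val_fin_le, mem_singleton, EmbeddingLike.apply_eq_iff_eq, Fin.ext_iff]
  omega

lemma eq_of_permChain_eq {σ τ : Equiv.Perm (Fin k)}
    (h : ∀ i ≤ k, permChain σ i = permChain τ i) : σ = τ := by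
  ext m
  have := permChain_succ_sdiff σ m
  rw [h _ m.isLt, h _ m.isLt.le, permChain_succ_sdiff, singleton_inj] at this
  rw [this]

end PermChain

section BlueTransversal

open scoped Classical

variable {α : Type*} {k : ℕ} (c : Finset (α ⊕ Fin k) → Bool)
  (σ : Equiv.Perm (Fin k))

def ReachesLevel (T : Finset α) (i : ℕ) : Prop :=
  ∃ X ⊆ T, c (X.disjSum (permChain σ i)) = true

def IsBlueTransversal (T : Finset α) : Prop :=
  c (T.disjSum (permChain σ k)) = true ∧ ∀ i ≤ k, ReachesLevel c σ T i

noncomputable def reachHeight (T : Finset α) : ℕ :=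
  Nat.findGreatest (fun j => ∀ i < j, ReachesLevel c σ T i) k

variable {c σ}

lemma permChain_eq_of_isBlueTransversal (hc : IsBlueLambdaFree c) {τ : Equiv.Perm (Fin k)}
    {T : Finset α} (hσ : IsBlueTransversal c σ T) (hτ : IsBlueTransversal c τ T) {i : ℕ}
    (hi : i ≤ k) : permChain σ i = permChain τ i := by
  obtain ⟨X, hXT, hX⟩ := hσ.2 i hi
  obtain ⟨Y, hYT, hY⟩ := hτ.2 i hi
  have hXZ := disjSum_mono hXT (permChain_mono σ hi)
  have hYZ := disjSum_mono hYT (permChain_mono τ hi)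
  rw [permChain_self] at hXZ hYZ
  have hZ := hσ.1
  rw [permChain_self] at hZ
  have hcard : #(permChain σ i) = #(permChain τ i) := by rw [card_permChain, card_permChain]
  rcases hc _ _ _ hX hY hZ hXZ hYZ with h | h
  · exact eq_of_subset_of_card_le (disjSum_subset_disjSum_iff.1 h).2 hcard.ge
  · exact (eq_of_subset_of_card_le (disjSum_subset_disjSum_iff.1 h).2 hcard.le).symm

lemma reachHeight_le (T : Finset α) : reachHeight c σ T ≤ k := Nat.findGreatest_le k

lemma reachesLevel_of_lt_reachHeight {T : Finset α} {i : ℕ} (hi : i < reachHeight c σ T) :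
    ReachesLevel c σ T i :=
  Nat.findGreatest_spec (P := fun j => ∀ i < j, ReachesLevel c σ T i) (Nat.zero_le k)
    (fun i hi => absurd hi i.not_lt_zero) i hi

lemma reachHeight_mono : Monotone (reachHeight c σ) := by
  intro T T' hT
  refine Nat.findGreatest_mono_left (fun j hj i hi => ?_) k
  obtain ⟨X, hXT, hX⟩ := hj i hi
  exact ⟨X, hXT.trans hT, hX⟩

lemma color_disjSum_reachHeight {T : Finset α} (hT : ¬ IsBlueTransversal c σ T) :
    c (T.disjSum (permChain σ (reachHeight c σ T))) = false := by
  rw [Bool.eq_false_iff]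
  intro hblue
  have hreach : ∀ i < reachHeight c σ T + 1, ReachesLevel c σ T i := fun i hi =>
    (Nat.lt_succ_iff_lt_or_eq.1 hi).elim reachesLevel_of_lt_reachHeight
      (fun hih => hih ▸ ⟨T, Subset.rfl, hblue⟩)
  rcases (reachHeight_le T).lt_or_eq with hlt | heq
  · exact Nat.not_succ_le_self _ (Nat.le_findGreatest hlt hreach)
  · rw [heq] at hblue hreach
    exact hT ⟨hblue, fun i hi => hreach i (Nat.lt_succ_of_le hi)⟩

end BlueTransversal

theorem IsBlueLambdaFree.exists_red_orderEmbedding {α : Type*} [Fintype α] {k : ℕ}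
    {c : Finset (α ⊕ Fin k) → Bool} (hk : 2 ^ Fintype.card α < k !)
    (hc : IsBlueLambdaFree c) :
    ∃ f : Finset α ↪o Finset (α ⊕ Fin k), ∀ A, c (f A) = false := by
  obtain ⟨σ, hσ⟩ : ∃ σ : Equiv.Perm (Fin k), ∀ T, ¬ IsBlueTransversal c σ T := by
    by_contra! h
    choose T hT using h
    have hT_inj : Function.Injective T := fun σ τ hστ =>
      eq_of_permChain_eq fun _ hi => permChain_eq_of_isBlueTransversal hc (hT σ) (hστ ▸ hT τ) hi
    have := Fintype.card_le_of_injective T hT_inj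
    rw [Fintype.card_perm, Fintype.card_fin, Fintype.card_finset] at this
    omega
  refine ⟨OrderEmbedding.ofMapLEIff (fun T => T.disjSum (permChain σ (reachHeight c σ T)))
    fun A B => ⟨fun h => (disjSum_subset_disjSum_iff.1 h).1,
      fun h => disjSum_mono h (permChain_mono σ (reachHeight_mono h))⟩,
    fun A => color_disjSum_reachHeight (hσ A)⟩

theorem hasBlueCopy_lam_or_hasRedCube {n k : ℕ} (hk : 2 ^ n < k !)
    (c : Finset (Fin (n + k)) → Bool) : HasBlueCopy Lam c ∨ HasRedCube n c := by
  refine or_iff_not_imp_left.2 fun hc => ?_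
  let e : Finset (Fin n ⊕ Fin k) ↪o Finset (Fin (n + k)) := mapEmbedding finSumFinEquiv.toEmbedding
  obtain ⟨f, hf⟩ := ((isBlueLambdaFree_of_not_hasBlueCopy hc).comp e).exists_red_orderEmbedding
    (by rwa [Fintype.card_fin])
  let g : Finset (Fin n) ↪o Finset (Fin (n + k)) := f.trans e
  exact ⟨g, g.injective, fun A B => g.le_iff_le.symm, hf⟩

theorem posetRamsey_lam_le_add {n k : ℕ} (hk : 2 ^ n < k !) : posetRamsey Lam n ≤ n + k :=
  Nat.sInf_le fun c => hasBlueCopy_lam_or_hasRedCube hk c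

open Real Filter

lemma two_pow_lt_factorial_of_mul_log_lt {n k : ℕ} (h : n * log 2 < k * (log k - 1)) :
    2 ^ n < k ! := by
  rcases k.eq_zero_or_pos with rfl | hk
  · simp only [CharP.cast_eq_zero, zero_mul] at h
    exact absurd h (not_lt.2 (by positivity))
  have hfac : (k : ℝ) ^ k ≤ exp k * k ! := by
    rw [← div_le_iff₀ (by positivity)]
    exact pow_div_factorial_le_exp _ (Nat.cast_nonneg k) k
  have hlog : log (2 ^ n : ℝ) < log (k ! : ℝ) := by
    have := log_le_log (by positivity) hfac
    rw [log_mul (by positivity) (by positivity), log_exp, log_pow] at this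
    rw [log_pow]
    linarith
  exact_mod_cast (log_lt_log_iff (by positivity) (by positivity)).1 hlog

lemma eventually_log_log_add_lt_mul_log {a : ℝ} (ha : 0 < a) (C : ℝ) :
    ∀ᶠ x in atTop, log (log x) + C < a * log x := by
  have hlittle := (isLittleO_log_id_atTop.comp_tendsto tendsto_log_atTop).def (half_pos ha)
  filter_upwards [hlittle, tendsto_log_atTop.eventually_ge_atTop 0,
    tendsto_log_atTop.eventually_gt_atTop (2 * C / a)] with x hx hx0 hxC
  simp only [Function.comp_apply, norm_eq_abs, id, abs_of_nonneg hx0] at hx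
  rw [div_lt_iff₀ ha] at hxC
  linarith [le_abs_self (log (log x))]

lemma log_div_logb_two {x : ℝ} (hx : 1 < x) :
    log (x / logb 2 x) = log x - log (log x) + log (log 2) := by
  have hlogx : log x ≠ 0 := (log_pos hx).ne'
  have hlog2 : log 2 ≠ 0 := (log_pos one_lt_two).ne'
  rw [logb, log_div (by positivity) (div_ne_zero hlogx hlog2), log_div hlogx hlog2]
  ring

lemma eventually_log_div_add_one_lt_log_div_logb_two {δ : ℝ} (hδ : 0 < δ) :
    ∀ᶠ x in atTop, log x / (1 + δ) + 1 < log (x / logb 2 x) := by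
  filter_upwards [eventually_gt_atTop 1,
    eventually_log_log_add_lt_mul_log (div_pos hδ (by linarith : 0 < 1 + δ)) (1 - log (log 2))]
    with x hx1 hx
  rw [log_div_logb_two hx1]
  have : log x / (1 + δ) = log x - δ / (1 + δ) * log x := by field_simp; ring
  linarith

lemma eventually_exists_two_pow_lt_factorial {ε : ℝ} (hε : 0 < ε) :
    ∀ᶠ n : ℕ in atTop, ∃ k : ℕ, 2 ^ n < k ! ∧ (k : ℝ) ≤ (1 + ε) * (n / logb 2 n) := by
  set δ := ε / 2
  have hδ : 0 < δ := half_pos hε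
  have hcast := tendsto_natCast_atTop_atTop (R := ℝ)
  filter_upwards [hcast.eventually (eventually_gt_atTop 1),
    hcast.eventually (eventually_log_div_add_one_lt_log_div_logb_two hδ),
    hcast.eventually (tendsto_log_atTop.eventually_ge_atTop ((1 + δ) * log δ⁻¹))]
    with n hx1 hQ hxδ
  set x : ℝ := (n : ℝ)
  set Q := x / logb 2 x
  have hlogx : 0 < log x := log_pos hx1
  have hQpos : 0 < Q := div_pos (by linarith) (logb_pos one_lt_two hx1)
  have hQlog : Q * log x = x * log 2 := by
    simp only [Q, logb]
    field_simp
  have hQδ : δ⁻¹ < Q := by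
    refine (log_lt_log_iff (by positivity) hQpos).1 ?_
    rw [← le_div_iff₀' (by linarith)] at hxδ
    linarith
  refine ⟨⌈(1 + δ) * Q⌉₊, two_pow_lt_factorial_of_mul_log_lt ?_, ?_⟩
  · have hk : (1 + δ) * Q ≤ ⌈(1 + δ) * Q⌉₊ := Nat.le_ceil _
    have hQk : Q ≤ ⌈(1 + δ) * Q⌉₊ := (le_mul_of_one_le_left hQpos.le (by linarith)).trans hk
    have hlogQ : log x < (1 + δ) * (log Q - 1) := by
      rw [← div_lt_iff₀' (by linarith)]
      linarith
    calc x * log 2 = Q * log x := hQlog.symm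
      _ < Q * ((1 + δ) * (log Q - 1)) := mul_lt_mul_of_pos_left hlogQ hQpos
      _ = (1 + δ) * Q * (log Q - 1) := by ring
      _ ≤ ⌈(1 + δ) * Q⌉₊ * (log ⌈(1 + δ) * Q⌉₊ - 1) := by
        gcongr
        linarith [div_pos hlogx (by linarith : 0 < 1 + δ)]
  · have hk : (⌈(1 + δ) * Q⌉₊ : ℝ) < (1 + δ) * Q + 1 := Nat.ceil_lt_add_one (by positivity)
    have hδQ : 1 < δ * Q := by rwa [inv_lt_iff_one_lt_mul₀' hδ] at hQδ
    have hε2 : ε = 2 * δ := by simp only [δ]; ring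
    rw [hε2]
    linarith

/-- For every `ε > 0` there is `n0` such that for all `n ≥ n0`,
`R(Λ, Q_n) ≤ n + (1 + ε) · (n / log n)` (log base 2). -/
theorem statement3 (ε : ℝ) (hε : ε > 0) :
    ∃ n0 : ℕ, ∀ n : ℕ, n ≥ n0 →
      (posetRamsey Lam n : ℝ) ≤ n + (1 + ε) * (n / Real.logb 2 n) := by
  obtain ⟨n0, hn0⟩ := eventually_atTop.1 (eventually_exists_two_pow_lt_factorial hε)
  refine ⟨n0, fun n hn => ?_⟩
  obtain ⟨k, hk, hkn⟩ := hn0 n hn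
  calc (posetRamsey Lam n : ℝ) ≤ (n + k : ℕ) := by exact_mod_cast posetRamsey_lam_le_add hk
    _ ≤ n + (1 + ε) * (n / logb 2 n) := by push_cast; linarith
end

section
/- Duality Theorem: Let X and Y be disjoint finite sets and let Q = Q(X∪Y) be a blue/red colored Boolean lattice which contains no blue copy of Λ. Then exactly one of the following holds: there is a red X-good copy of Q(X) in Q, or there is a blue Y-shrub in Q. -/
/-- With blue/red coloring `c` (blue = `true`, red = `false`) of the Boolean lattice on a
ground set partitioned into `X ∪ Y`, there is a red `X`-good copy of `Q(X)`: an embedding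
`φ` of `Q(X)` with all images red and `φ(A) ∩ X = A` for all `A ⊆ X`. -/
def RedXGoodCopy {V : Type*} [DecidableEq V] (c : Finset V → Bool) (X : Finset V) : Prop :=
  ∃ φ : Finset V → Finset V,
    (∀ A B : Finset V, A ⊆ X → B ⊆ X → (A ⊆ B ↔ φ A ⊆ φ B)) ∧
    (∀ A : Finset V, A ⊆ X → φ A ∩ X = A) ∧
    (∀ A : Finset V, A ⊆ X → c (φ A) = false)

/-- `S` is an ordered subset of `Y`: a sequence of distinct elements of `Y`
(a vertex of the factorial tree `O(Y)`, ordered by the prefix relation `<+:`). -/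
def OrdSubset {V : Type*} (Y : Finset V) (S : List V) : Prop :=
  S.Nodup ∧ ∀ v ∈ S, v ∈ Y

/-- `τ` is a `Y`-good embedding of the factorial tree `O(Y)` into the Boolean lattice:
for ordered subsets `S, T` of `Y`, `S` is a prefix of `T` iff `τ S ⊆ τ T`, and
`τ S ∩ Y` is the underlying set of `S`. Its image is a `Y`-shrub. -/
def IsShrubMap {V : Type*} [DecidableEq V] (Y : Finset V) (τ : List V → Finset V) : Prop :=
  (∀ S T : List V, OrdSubset Y S → OrdSubset Y T → (S <+: T ↔ τ S ⊆ τ T)) ∧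
  (∀ S : List V, OrdSubset Y S → τ S ∩ Y = S.toFinset)

/-- `τ` determines a weak `Y`-shrub: `τ S ∩ Y` is the underlying set of `S` for every
ordered subset `S` of `Y`, and `τ S ⊊ τ T` whenever `S` is a strict prefix of `T`. -/
def IsWeakShrubMap {V : Type*} [DecidableEq V] (Y : Finset V) (τ : List V → Finset V) : Prop :=
  (∀ S T : List V, OrdSubset Y S → OrdSubset Y T → S <+: T → S ≠ T → τ S ⊂ τ T) ∧
  (∀ S : List V, OrdSubset Y S → τ S ∩ Y = S.toFinset)

/-- There is a monochromatic blue `Y`-shrub (blue = `true`). -/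
def BlueYShrub {V : Type*} [DecidableEq V] (c : Finset V → Bool) (Y : Finset V) : Prop :=
  ∃ τ : List V → Finset V, IsShrubMap Y τ ∧ ∀ S : List V, OrdSubset Y S → c (τ S) = true

/-- The coloring `c` admits no blue copy of the poset `Λ`: there are no blue vertices
`A, B, C` with `A ⊂ C`, `B ⊂ C` and `A`, `B` incomparable. -/
def NoBlueLambda {V : Type*} (c : Finset V → Bool) : Prop :=
  ¬ ∃ A B C : Finset V, c A = true ∧ c B = true ∧ c C = true ∧
      A ⊂ C ∧ B ⊂ C ∧ ¬ A ⊆ B ∧ ¬ B ⊆ A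

/-!
Not both: walk up the blue shrub, always extending the branch by a new element of the `Y`-part
of the red copy of the current vertex's `X`-part. When no new element is left, that red copy and
the blue shrub vertex agree on `X` and on `Y`, so they coincide.

At least one: induction on `|Y|`, above a floor `F`. If no blue shrub grows above `F`, then every
blue root `F ∪ R` (`R ⊆ X`) has a direction `y ∈ Y` above which no blue shrub grows, so induction
gives a red copy for the subproblem `(insert y (F ∪ R), X \ R, Y \ {y})`. These copies are glued
along the least blue root below each `A ⊆ X`. The shrubs built this way are only weak, but two
forking branches of a blue weak shrub would span a blue `Λ`, so they are genuine shrubs.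
-/

open Finset

theorem List.exists_fork_of_not_prefix {α : Type*} :
    ∀ {S T : List α}, ¬ S <+: T → ¬ T <+: S →
      ∃ P a b S₂ T₂, a ≠ b ∧ S = P ++ a :: S₂ ∧ T = P ++ b :: T₂
  | [], _, hST, _ => absurd List.nil_prefix hST
  | _ :: _, [], _, hTS => absurd List.nil_prefix hTS
  | a :: S, b :: T, hST, hTS => by
    by_cases hab : a = b
    · subst hab
      obtain ⟨P, a', b', S₂, T₂, hne, rfl, rfl⟩ := exists_fork_of_not_prefix (S := S) (T := T)
        (by simpa [List.cons_prefix_cons] using hST) (by simpa [List.cons_prefix_cons] using hTS)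
      exact ⟨a :: P, a', b', S₂, T₂, hne, rfl, rfl⟩
    · exact ⟨[], a, b, S, T, hab, rfl, rfl⟩

theorem Finset.subset_of_union_subset_union {α : Type*} [DecidableEq α] {s t u : Finset α}
    (hst : Disjoint s t) (h : s ∪ t ⊆ s ∪ u) : t ⊆ u := fun _ ha =>
  (mem_union.1 (h (mem_union_right _ ha))).resolve_left (disjoint_right.1 hst ha)

theorem Finset.eq_of_inter_eq_of_inter_eq {α : Type*} [DecidableEq α] [Fintype α]
    {X Y s t : Finset α} (hXY : X ∪ Y = univ) (hX : s ∩ X = t ∩ X) (hY : s ∩ Y = t ∩ Y) :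
    s = t := by
  rw [← inter_univ s, ← inter_univ t, ← hXY, inter_union_distrib_left, inter_union_distrib_left,
    hX, hY]

theorem Finset.exists_not_le_and_not_le {α : Type*} [PartialOrder α] {s : Finset α}
    (hs : s.Nonempty) (h : ∀ m, ¬ IsLeast (s : Set α) m) :
    ∃ a ∈ s, ∃ b ∈ s, ¬ a ≤ b ∧ ¬ b ≤ a := by
  obtain ⟨m, hm⟩ := s.exists_minimal hs
  obtain ⟨b, hb, hmb⟩ : ∃ b ∈ s, ¬ m ≤ b := by
    simpa [IsLeast, lowerBounds, hm.prop] using h m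
  exact ⟨m, hm.prop, b, hb, hmb, fun hbm => hmb (hm.2 hb hbm)⟩

section

variable {V : Type*} {c : Finset V → Bool}

theorem NoBlueLambda.eq_false (hΛ : NoBlueLambda c) {A B C : Finset V} (hA : c A = true)
    (hB : c B = true) (hAC : A ⊂ C) (hBC : B ⊂ C) (hAB : ¬ A ⊆ B) (hBA : ¬ B ⊆ A) :
    c C = false := by
  by_contra hC
  exact hΛ ⟨A, B, C, hA, hB, by simpa using hC, hAC, hBC, hAB, hBA⟩

section OrdSubset

variable {Y : Finset V} {S T : List V} {y : V}

theorem OrdSubset.of_prefix (hT : OrdSubset Y T) (h : S <+: T) : OrdSubset Y S :=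
  ⟨hT.1.sublist h.sublist, fun v hv => hT.2 v (h.sublist.mem hv)⟩

theorem OrdSubset.concat (hS : OrdSubset Y S) (hy : y ∈ Y) (hyS : y ∉ S) :
    OrdSubset Y (S ++ [y]) :=
  ⟨by simpa using hS.1.concat hyS, by simpa [or_imp, forall_and] using ⟨hS.2, hy⟩⟩

variable [DecidableEq V]

theorem OrdSubset.length_le (hS : OrdSubset Y S) : S.length ≤ Y.card := by
  rw [← List.toFinset_card_of_nodup hS.1]
  exact card_le_card fun v hv => hS.2 v (List.mem_toFinset.1 hv)

theorem ordSubset_cons_iff :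
    OrdSubset Y (y :: S) ↔ y ∈ Y ∧ y ∉ S ∧ OrdSubset (Y.erase y) S := by
  simp only [OrdSubset, List.nodup_cons, List.mem_cons, forall_eq_or_imp, mem_erase]
  constructor
  · rintro ⟨⟨hyS, hS⟩, hy, hSY⟩
    exact ⟨hy, hyS, hS, fun v hv => ⟨by rintro rfl; exact hyS hv, hSY v hv⟩⟩
  · rintro ⟨hy, hyS, hS, hSY⟩
    exact ⟨⟨hyS, hS⟩, hy, fun v hv => (hSY v hv).2⟩

end OrdSubset

variable [DecidableEq V]

namespace IsWeakShrubMap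

variable {Y : Finset V} {τ : List V → Finset V} {S T : List V}

theorem mem_iff (hτ : IsWeakShrubMap Y τ) (hS : OrdSubset Y S) {v : V} (hv : v ∈ Y) :
    v ∈ τ S ↔ v ∈ S := by
  rw [← List.mem_toFinset, ← hτ.2 S hS, mem_inter, and_iff_left hv]

theorem subset_of_prefix (hτ : IsWeakShrubMap Y τ) (hT : OrdSubset Y T) (h : S <+: T) :
    τ S ⊆ τ T := by
  rcases eq_or_ne S T with rfl | hne
  · rfl
  · exact (hτ.1 S T (hT.of_prefix h) hT h hne).subset

/-- Where two branches fork, their first vertices `P ++ [a]` and `P ++ [b]` lie below `τ T`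
and are separated by `a` and `b`: a blue `Λ`. -/
theorem prefix_of_subset (hΛ : NoBlueLambda c) (hτ : IsWeakShrubMap Y τ)
    (hblue : ∀ S, OrdSubset Y S → c (τ S) = true) (hS : OrdSubset Y S) (hT : OrdSubset Y T)
    (h : τ S ⊆ τ T) : S <+: T := by
  by_contra hST
  by_cases hTS : T <+: S
  · have hne : T ≠ S := fun hTS' => hST (hTS' ▸ List.prefix_refl T)
    exact (hτ.1 T S hT hS hTS hne).not_subset h
  obtain ⟨P, a, b, S₂, T₂, hab, rfl, rfl⟩ := List.exists_fork_of_not_prefix hST hTS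
  have hPa : OrdSubset Y (P ++ [a]) := hS.of_prefix ⟨S₂, by simp⟩
  have hPb : OrdSubset Y (P ++ [b]) := hT.of_prefix ⟨T₂, by simp⟩
  have haY : a ∈ Y := hPa.2 a (by simp)
  have hbY : b ∈ Y := hPb.2 b (by simp)
  have haP : a ∉ P := fun ha => (List.nodup_append.1 hPa.1).2.2 a ha a (by simp) rfl
  have hbP : b ∉ P := fun hb => (List.nodup_append.1 hPb.1).2.2 b hb b (by simp) rfl
  have ha_a : a ∈ τ (P ++ [a]) := (hτ.mem_iff hPa haY).2 (by simp)
  have hb_b : b ∈ τ (P ++ [b]) := (hτ.mem_iff hPb hbY).2 (by simp)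
  have ha_b : a ∉ τ (P ++ [b]) := by rw [hτ.mem_iff hPb haY]; simp [haP, hab]
  have hb_a : b ∉ τ (P ++ [a]) := by rw [hτ.mem_iff hPa hbY]; simp [hbP, Ne.symm hab]
  have hPaT : τ (P ++ [a]) ⊆ τ (P ++ b :: T₂) := (hτ.subset_of_prefix hS ⟨S₂, by simp⟩).trans h
  have hPbT : τ (P ++ [b]) ⊆ τ (P ++ b :: T₂) := hτ.subset_of_prefix hT ⟨T₂, by simp⟩
  have hred := hΛ.eq_false (hblue _ hPa) (hblue _ hPb)
    ((ssubset_iff_of_subset hPaT).2 ⟨b, hPbT hb_b, hb_a⟩)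
    ((ssubset_iff_of_subset hPbT).2 ⟨a, hPaT ha_a, ha_b⟩)
    (fun h => ha_b (h ha_a)) (fun h => hb_a (h hb_b))
  simp [hblue _ hT] at hred

theorem isShrubMap (hΛ : NoBlueLambda c) (hτ : IsWeakShrubMap Y τ)
    (hblue : ∀ S, OrdSubset Y S → c (τ S) = true) : IsShrubMap Y τ :=
  ⟨fun _ _ hS hT => ⟨hτ.subset_of_prefix hT, hτ.prefix_of_subset hΛ hblue hS hT⟩, hτ.2⟩

end IsWeakShrubMap

-- In the induction the floor `F` collects the roots and branch elements chosen so far.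
structure IsBlueShrubAbove (c : Finset V → Bool) (F Y : Finset V) (τ : List V → Finset V) :
    Prop where
  isWeakShrubMap : IsWeakShrubMap Y τ
  floor_subset : ∀ S, OrdSubset Y S → F ⊆ τ S
  blue : ∀ S, OrdSubset Y S → c (τ S) = true

theorem IsBlueShrubAbove.mono {F G Y : Finset V} {τ : List V → Finset V}
    (hτ : IsBlueShrubAbove c G Y τ) (hFG : F ⊆ G) : IsBlueShrubAbove c F Y τ :=
  ⟨hτ.isWeakShrubMap, fun S hS => hFG.trans (hτ.floor_subset S hS), hτ.blue⟩

theorem exists_isBlueShrubAbove_of_forall_insert {G Y : Finset V} (hG : c G = true)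
    (hGY : Disjoint G Y)
    (hchild : ∀ y ∈ Y, ∃ τ, IsBlueShrubAbove c (insert y G) (Y.erase y) τ) :
    ∃ τ, IsBlueShrubAbove c G Y τ := by
  choose! τ hτ using hchild
  let σ : List V → Finset V
    | [] => G
    | y :: S => τ y S
  refine ⟨σ, ⟨⟨?_, ?_⟩, ?_, ?_⟩⟩
  · rintro (_ | ⟨y, S⟩) (_ | ⟨y', T⟩) hS hT hST hne
    · exact absurd rfl hne
    · obtain ⟨hy, -, hT⟩ := ordSubset_cons_iff.1 hT
      have hfloor := (hτ y' hy).floor_subset T hT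
      exact (ssubset_iff_of_subset ((subset_insert _ _).trans hfloor)).2
        ⟨y', hfloor (mem_insert_self _ _), disjoint_right.1 hGY hy⟩
    · exact absurd (List.prefix_nil.1 hST) (List.cons_ne_nil _ _)
    · obtain ⟨rfl, hST'⟩ := List.cons_prefix_cons.1 hST
      obtain ⟨hy, -, hS⟩ := ordSubset_cons_iff.1 hS
      exact (hτ y hy).isWeakShrubMap.1 S T hS (ordSubset_cons_iff.1 hT).2.2 hST'
        fun h => hne (h ▸ rfl)
  · rintro (_ | ⟨y, S⟩) hS
    · simpa [σ] using disjoint_iff_inter_eq_empty.1 hGY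
    · obtain ⟨hy, -, hS⟩ := ordSubset_cons_iff.1 hS
      have hyτ : y ∈ τ y S := (hτ y hy).floor_subset S hS (mem_insert_self _ _)
      rw [List.toFinset_cons, ← (hτ y hy).isWeakShrubMap.2 S hS, inter_erase,
        insert_erase (mem_inter.2 ⟨hyτ, hy⟩)]
  · rintro (_ | ⟨y, S⟩) hS
    · exact subset_rfl
    · obtain ⟨hy, -, hS⟩ := ordSubset_cons_iff.1 hS
      exact (subset_insert _ _).trans ((hτ y hy).floor_subset S hS)
  · rintro (_ | ⟨y, S⟩) hS
    · exact hG
    · obtain ⟨hy, -, hS⟩ := ordSubset_cons_iff.1 hS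
      exact (hτ y hy).blue S hS

-- `A ↦ F ∪ A ∪ g A` is a red `X`-good copy of `Q(X)` above `F`.
structure IsRedMap (c : Finset V → Bool) (F X Y : Finset V) (g : Finset V → Finset V) :
    Prop where
  subset : ∀ A ⊆ X, g A ⊆ Y
  mono : ∀ ⦃A B⦄, A ⊆ B → B ⊆ X → g A ⊆ g B
  red : ∀ A ⊆ X, c (F ∪ A ∪ g A) = false

theorem IsRedMap.redXGoodCopy {F X Y : Finset V} {g : Finset V → Finset V}
    (hg : IsRedMap c F X Y g) (hFX : Disjoint F X) (hXY : Disjoint X Y) : RedXGoodCopy c X := by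
  have hgood : ∀ A ⊆ X, (F ∪ A ∪ g A) ∩ X = A := by
    intro A hA
    rw [union_inter_distrib_right, union_inter_distrib_right, disjoint_iff_inter_eq_empty.1 hFX,
      inter_eq_left.2 hA, disjoint_iff_inter_eq_empty.1 (hXY.mono_right (hg.subset A hA)).symm,
      empty_union, union_empty]
  refine ⟨fun A => F ∪ A ∪ g A, fun A B hA hB => ⟨fun hAB => ?_, fun h => ?_⟩, hgood, hg.red⟩
  · exact union_subset_union (union_subset_union_right hAB) (hg.mono hAB hB)
  · rw [← hgood A hA, ← hgood B hB]
    exact inter_subset_inter_right h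

section Glue

variable {F X Y A B R m : Finset V}

def blueRoots (c : Finset V → Bool) (F A : Finset V) : Finset (Finset V) :=
  A.powerset.filter fun R => c (F ∪ R) = true

theorem mem_blueRoots : R ∈ blueRoots c F A ↔ R ⊆ A ∧ c (F ∪ R) = true := by
  simp [blueRoots]

theorem blueRoots_mono (h : A ⊆ B) : blueRoots c F A ⊆ blueRoots c F B := fun R hR => by
  rw [mem_blueRoots] at hR ⊢
  exact ⟨hR.1.trans h, hR.2⟩

theorem IsLeast.blueRoots_of_subset (hm : IsLeast (blueRoots c F B : Set (Finset V)) m)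
    (h : A ⊆ B) (hA : (blueRoots c F A).Nonempty) :
    IsLeast (blueRoots c F A : Set (Finset V)) m := by
  obtain ⟨R, hR⟩ := hA
  have hmR : m ⊆ R := hm.2 (blueRoots_mono h hR)
  exact ⟨mem_blueRoots.2 ⟨hmR.trans (mem_blueRoots.1 hR).1, (mem_blueRoots.1 hm.1).2⟩,
    fun R' hR' => hm.2 (blueRoots_mono h hR')⟩

def IsRootData (c : Finset V → Bool) (F X Y : Finset V) (y : Finset V → V)
    (g : Finset V → Finset V → Finset V) : Prop :=
  ∀ R ⊆ X, c (F ∪ R) = true →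
    y R ∈ Y ∧ IsRedMap c (insert (y R) (F ∪ R)) (X \ R) (Y.erase (y R)) (g R)

open Classical in
/-- If the blue roots below `A` do not form a chain, `F ∪ A ∪ Y` is red (two incomparable blue
roots would span a blue `Λ` with it), so `g A = Y` can be taken. -/
noncomputable def glueRedMaps (c : Finset V → Bool) (F Y : Finset V) (y : Finset V → V)
    (g : Finset V → Finset V → Finset V) (A : Finset V) : Finset V :=
  if h : ∃ m, IsLeast (blueRoots c F A : Set (Finset V)) m then
    insert (y h.choose) (g h.choose (A \ h.choose))
  else if (blueRoots c F A).Nonempty then Y else ∅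

variable {y : Finset V → V} {g : Finset V → Finset V → Finset V}

theorem glueRedMaps_of_isLeast (hm : IsLeast (blueRoots c F A : Set (Finset V)) m) :
    glueRedMaps c F Y y g A = insert (y m) (g m (A \ m)) := by
  have hex : ∃ m, IsLeast (blueRoots c F A : Set (Finset V)) m := ⟨m, hm⟩
  rw [glueRedMaps, dif_pos hex, hex.choose_spec.unique hm]

theorem glueRedMaps_of_not_isLeast (h : ∀ m, ¬ IsLeast (blueRoots c F A : Set (Finset V)) m)
    (hA : (blueRoots c F A).Nonempty) : glueRedMaps c F Y y g A = Y := by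
  rw [glueRedMaps, dif_neg (not_exists.2 h), if_pos hA]

theorem glueRedMaps_of_eq_empty (hA : blueRoots c F A = ∅) : glueRedMaps c F Y y g A = ∅ := by
  have h : ¬ ∃ m, IsLeast (blueRoots c F A : Set (Finset V)) m := by
    rintro ⟨m, hm⟩
    simpa [hA] using hm.1
  rw [glueRedMaps, dif_neg h, if_neg (not_nonempty_iff_eq_empty.2 hA)]

theorem IsRootData.glueRedMaps_subset (hdata : IsRootData c F X Y y g) (hA : A ⊆ X) :
    glueRedMaps c F Y y g A ⊆ Y := by
  by_cases hleast : ∃ m, IsLeast (blueRoots c F A : Set (Finset V)) m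
  · obtain ⟨m, hm⟩ := hleast
    obtain ⟨hmA, hmblue⟩ := mem_blueRoots.1 hm.1
    obtain ⟨hyY, hgm⟩ := hdata m (hmA.trans hA) hmblue
    rw [glueRedMaps_of_isLeast hm]
    exact insert_subset hyY
      ((hgm.subset _ (sdiff_subset_sdiff hA subset_rfl)).trans (erase_subset _ _))
  rcases (blueRoots c F A).eq_empty_or_nonempty with hA | hA
  · rw [glueRedMaps_of_eq_empty hA]
    exact empty_subset _
  · rw [glueRedMaps_of_not_isLeast (not_exists.1 hleast) hA]

theorem IsRootData.glueRedMaps_mono (hdata : IsRootData c F X Y y g) (hAB : A ⊆ B)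
    (hB : B ⊆ X) : glueRedMaps c F Y y g A ⊆ glueRedMaps c F Y y g B := by
  rcases (blueRoots c F A).eq_empty_or_nonempty with hA | hA
  · rw [glueRedMaps_of_eq_empty hA]
    exact empty_subset _
  by_cases hleast : ∃ m, IsLeast (blueRoots c F B : Set (Finset V)) m
  · obtain ⟨m, hm⟩ := hleast
    obtain ⟨hmB, hmblue⟩ := mem_blueRoots.1 hm.1
    rw [glueRedMaps_of_isLeast hm, glueRedMaps_of_isLeast (hm.blueRoots_of_subset hAB hA)]
    exact insert_subset_insert _ ((hdata m (hmB.trans hB) hmblue).2.mono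
      (sdiff_subset_sdiff hAB subset_rfl) (sdiff_subset_sdiff hB subset_rfl))
  · rw [glueRedMaps_of_not_isLeast (not_exists.1 hleast) (hA.mono (blueRoots_mono hAB))]
    exact hdata.glueRedMaps_subset (hAB.trans hB)

theorem IsRootData.glueRedMaps_red (hΛ : NoBlueLambda c) (hFX : Disjoint F X)
    (hFY : Disjoint F Y) (hXY : Disjoint X Y) (hdata : IsRootData c F X Y y g) (hA : A ⊆ X) :
    c (F ∪ A ∪ glueRedMaps c F Y y g A) = false := by
  by_cases hleast : ∃ m, IsLeast (blueRoots c F A : Set (Finset V)) m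
  · obtain ⟨m, hm⟩ := hleast
    obtain ⟨hmA, hmblue⟩ := mem_blueRoots.1 hm.1
    have hred := (hdata m (hmA.trans hA) hmblue).2.red (A \ m) (sdiff_subset_sdiff hA subset_rfl)
    rw [glueRedMaps_of_isLeast hm]
    convert hred using 2
    ext v
    simp only [mem_union, mem_insert, mem_sdiff]
    have := @hmA v
    tauto
  rcases (blueRoots c F A).eq_empty_or_nonempty with hroots | hroots
  · rw [glueRedMaps_of_eq_empty hroots, union_empty]
    by_contra hblue
    have hAA : A ∈ blueRoots c F A := mem_blueRoots.2 ⟨subset_rfl, by simpa using hblue⟩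
    simp [hroots] at hAA
  rw [glueRedMaps_of_not_isLeast (not_exists.1 hleast) hroots]
  obtain ⟨R₁, h₁, R₂, h₂, h₁₂, h₂₁⟩ :=
    exists_not_le_and_not_le hroots (not_exists.1 hleast)
  rw [mem_blueRoots] at h₁ h₂
  obtain ⟨y₀, hy₀⟩ : Y.Nonempty := ⟨_, (hdata R₁ (h₁.1.trans hA) h₁.2).1⟩
  have hssubset : ∀ R ⊆ A, F ∪ R ⊂ F ∪ A ∪ Y := fun R hR =>
    (ssubset_iff_of_subset ((union_subset_union_right hR).trans subset_union_left)).2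
      ⟨y₀, mem_union_right _ hy₀, notMem_union.2
        ⟨disjoint_right.1 hFY hy₀, fun h => disjoint_right.1 hXY hy₀ (hR.trans hA h)⟩⟩
  exact hΛ.eq_false h₁.2 h₂.2 (hssubset R₁ h₁.1) (hssubset R₂ h₂.1)
    (fun h => h₁₂ (subset_of_union_subset_union (hFX.mono_right (h₁.1.trans hA)) h))
    (fun h => h₂₁ (subset_of_union_subset_union (hFX.mono_right (h₂.1.trans hA)) h))

theorem IsRootData.isRedMap_glueRedMaps (hΛ : NoBlueLambda c) (hFX : Disjoint F X)
    (hFY : Disjoint F Y) (hXY : Disjoint X Y) (hdata : IsRootData c F X Y y g) :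
    IsRedMap c F X Y (glueRedMaps c F Y y g) :=
  ⟨fun _ => hdata.glueRedMaps_subset, fun _ _ => hdata.glueRedMaps_mono,
    fun _ => hdata.glueRedMaps_red hΛ hFX hFY hXY⟩

end Glue

theorem exists_isRedMap_of_forall_blueRoot {F X Y : Finset V} (hΛ : NoBlueLambda c)
    (hFX : Disjoint F X) (hFY : Disjoint F Y) (hXY : Disjoint X Y)
    (hroots : ∀ R ⊆ X, c (F ∪ R) = true →
      ∃ y ∈ Y, ∃ g, IsRedMap c (insert y (F ∪ R)) (X \ R) (Y.erase y) g) :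
    ∃ g, IsRedMap c F X Y g := by
  rcases isEmpty_or_nonempty V with hV | hV
  · refine ⟨fun _ => ∅, fun _ _ => empty_subset _, fun _ _ _ _ => subset_rfl, fun A hA => ?_⟩
    by_contra hblue
    obtain ⟨y, -⟩ := hroots A hA (by simpa using hblue)
    exact hV.elim y
  choose! y hy g hg using hroots
  exact ⟨_, IsRootData.isRedMap_glueRedMaps hΛ hFX hFY hXY
    fun R hR hblue => ⟨hy R hR hblue, hg R hR hblue⟩⟩

theorem exists_isRedMap_or_exists_isBlueShrubAbove (hΛ : NoBlueLambda c) (F X Y : Finset V)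
    (hFX : Disjoint F X) (hFY : Disjoint F Y) (hXY : Disjoint X Y) :
    (∃ g, IsRedMap c F X Y g) ∨ ∃ τ, IsBlueShrubAbove c F Y τ := by
  induction Y using Finset.strongInduction generalizing F X with
  | _ Y ih =>
  by_cases hshrub : ∃ τ, IsBlueShrubAbove c F Y τ
  · exact .inr hshrub
  refine .inl (exists_isRedMap_of_forall_blueRoot hΛ hFX hFY hXY fun R hR hblue => ?_)
  by_contra! hno
  refine hshrub ((exists_isBlueShrubAbove_of_forall_insert hblue
    (disjoint_union_left.2 ⟨hFY, hXY.mono_left hR⟩) fun y hy => ?_).imp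
      fun τ hτ => hτ.mono subset_union_left)
  refine (ih _ (erase_ssubset hy) _ _ ?_ ?_ ?_).resolve_left (not_exists.2 (hno y hy))
  · exact disjoint_insert_left.2 ⟨fun h => disjoint_right.1 hXY hy (mem_sdiff.1 h).1,
      disjoint_union_left.2 ⟨hFX.mono_right sdiff_subset, disjoint_sdiff⟩⟩
  · exact disjoint_insert_left.2 ⟨notMem_erase y Y,
      disjoint_union_left.2 ⟨hFY.mono_right (erase_subset _ _), hXY.mono hR (erase_subset _ _)⟩⟩
  · exact hXY.mono sdiff_subset (erase_subset _ _)

theorem exists_ordSubset_eq_toFinset {Y : Finset V} (ψ : List V → Finset V)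
    (hψY : ∀ S, ψ S ⊆ Y) (hψ : ∀ S y, OrdSubset Y (S ++ [y]) → ψ S ⊆ ψ (S ++ [y]))
    (S : List V) (hS : OrdSubset Y S) (hSψ : S.toFinset ⊆ ψ S) :
    ∃ T, OrdSubset Y T ∧ ψ T = T.toFinset := by
  by_cases h : ψ S = S.toFinset
  · exact ⟨S, hS, h⟩
  obtain ⟨y, hyψ, hyS⟩ := not_subset.1 fun h' => h (h'.antisymm hSψ)
  have hSy : OrdSubset Y (S ++ [y]) := hS.concat (hψY S hyψ) (by simpa using hyS)
  exact exists_ordSubset_eq_toFinset ψ hψY hψ (S ++ [y]) hSy (by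
    rw [List.toFinset_append]
    exact union_subset (hSψ.trans (hψ S y hSy)) (by simpa using hψ S y hSy hyψ))
termination_by Y.card - S.length
decreasing_by
  have := hSy.length_le
  simp only [List.length_append, List.length_singleton] at this ⊢
  omega

theorem not_redXGoodCopy_and_blueYShrub [Fintype V] {X Y : Finset V} (hXY : X ∪ Y = univ) :
    ¬ (RedXGoodCopy c X ∧ BlueYShrub c Y) := by
  rintro ⟨⟨φ, hφ, hφX, hred⟩, ⟨τ, hτ, hblue⟩⟩
  have hφτ : ∀ S y, OrdSubset Y (S ++ [y]) → φ (τ S ∩ X) ⊆ φ (τ (S ++ [y]) ∩ X) :=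
    fun S y hSy => (hφ _ _ inter_subset_right inter_subset_right).1 (inter_subset_inter_right
      ((hτ.1 S _ (hSy.of_prefix (List.prefix_append _ _)) hSy).1 (List.prefix_append _ _)))
  obtain ⟨S, hS, hSY⟩ := exists_ordSubset_eq_toFinset (fun S => φ (τ S ∩ X) ∩ Y)
    (fun _ => inter_subset_right) (fun S y hSy => inter_subset_inter_right (hφτ S y hSy))
    [] ⟨List.nodup_nil, by simp⟩ (by simp)
  have hφS : φ (τ S ∩ X) = τ S :=
    eq_of_inter_eq_of_inter_eq hXY (hφX _ inter_subset_right) (hSY.trans (hτ.2 S hS).symm)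
  simpa [hφS, hblue S hS] using hred (τ S ∩ X) inter_subset_right

end

/-- Duality Theorem: Let `X`, `Y` be disjoint sets and let `Q(X ∪ Y)` be
blue/red colored with no blue copy of `Λ`. Then exactly one of the following holds:
there is a red `X`-good copy of `Q(X)`, or there is a blue `Y`-shrub. -/
theorem statement14 {V : Type*} [DecidableEq V] [Fintype V]
    (X Y : Finset V) (hd : Disjoint X Y) (hc : X ∪ Y = Finset.univ)
    (c : Finset V → Bool) (hΛ : NoBlueLambda c) :
    Xor' (RedXGoodCopy c X) (BlueYShrub c Y) := by
  refine (xor_iff_or_and_not_and _ _).2 ⟨?_, not_redXGoodCopy_and_blueYShrub hc⟩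
  rcases exists_isRedMap_or_exists_isBlueShrubAbove hΛ ∅ X Y (disjoint_empty_left _)
    (disjoint_empty_left _) hd with ⟨g, hg⟩ | ⟨τ, hτ⟩
  · exact .inl (hg.redXGoodCopy (disjoint_empty_left _) hd)
  · exact .inr ⟨τ, hτ.isWeakShrubMap.isShrubMap hΛ hτ.blue, hτ.blue⟩
end

section
/- Let X and Y be disjoint finite sets and let Q = Q(X∪Y) be a blue/red colored Boolean lattice with no blue copy of Λ. If the vertex (∅, ∅) is not embeddable, then there is a monochromatic blue weak Y-shrub in Q. -/
/-- For `X0 ⊆ X` and `Y0 ⊆ Y`, the vertex `(X0, Y0) = X0 ∪ Y0` is embeddable: there is a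
map `φ` defined on `{X' : X0 ⊆ X' ⊆ X}` into the lattice with `X1 ⊆ X2` iff `φ X1 ⊆ φ X2`,
all images red (`false`), `φ X' ∩ X = X'` for all such `X'`, and `φ X0 ⊇ X0 ∪ Y0`. -/
def Embeddable {V : Type*} [DecidableEq V] (c : Finset V → Bool) (X : Finset V)
    (X0 Y0 : Finset V) : Prop :=
  ∃ φ : Finset V → Finset V,
    (∀ A B : Finset V, X0 ⊆ A → A ⊆ X → X0 ⊆ B → B ⊆ X → (A ⊆ B ↔ φ A ⊆ φ B)) ∧
    (∀ A : Finset V, X0 ⊆ A → A ⊆ X → c (φ A) = false) ∧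
    (∀ A : Finset V, X0 ⊆ A → A ⊆ X → φ A ∩ X = A) ∧
    X0 ∪ Y0 ⊆ φ X0

/-! If `(X0, Y0)` is not embeddable, some blue vertex `(X1, Y0)` with `X1 ⊇ X0` has the
property that no `(X1, Y0 + y)` is embeddable: otherwise the red embeddings above the minimal
blue vertices `(M, Y0)` glue together, by taking unions, into an embedding for `(X0, Y0)`; a
glued vertex lying above two distinct minimal blue vertices is red because there is no blue `Λ`.
Starting from `(∅, ∅)` and adding the elements of an ordered subset of `Y` one at a time, this
step produces the vertices of a blue weak `Y`-shrub. -/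

theorem NoBlueLambda.subset_or_subset {V : Type*} {c : Finset V → Bool} (hΛ : NoBlueLambda c)
    {A B C : Finset V} (hA : c A = true) (hB : c B = true) (hC : c C = true)
    (hAC : A ⊂ C) (hBC : B ⊂ C) : A ⊆ B ∨ B ⊆ A := by
  by_contra! h
  exact hΛ ⟨A, B, C, hA, hB, hC, hAC, hBC, h.1, h.2⟩

namespace OrdSubset

variable {V : Type*} {Y : Finset V} {y : V} {S : List V}

theorem of_cons (h : OrdSubset Y (y :: S)) : OrdSubset Y S :=
  ⟨h.1.of_cons, fun v hv => h.2 v (List.mem_cons_of_mem _ hv)⟩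

theorem reverse (h : OrdSubset Y S) : OrdSubset Y S.reverse :=
  ⟨List.nodup_reverse.2 h.1, fun v hv => h.2 v (List.mem_reverse.1 hv)⟩

theorem toFinset_subset [DecidableEq V] (h : OrdSubset Y S) : S.toFinset ⊆ Y :=
  fun v hv => h.2 v (List.mem_toFinset.1 hv)

end OrdSubset

open Finset

section Embedding

variable {V : Type*} [DecidableEq V] {c : Finset V → Bool} {X X0 Y0 A B M : Finset V}

def IsRedXGoodOn (c : Finset V → Bool) (X X0 : Finset V) (φ : Finset V → Finset V) : Prop :=
  (∀ A B, X0 ⊆ A → A ⊆ B → B ⊆ X → φ A ⊆ φ B) ∧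
    ∀ A, X0 ⊆ A → A ⊆ X → c (φ A) = false ∧ φ A ∩ X = A

theorem embeddable_iff :
    Embeddable c X X0 Y0 ↔ ∃ φ, IsRedXGoodOn c X X0 φ ∧ X0 ∪ Y0 ⊆ φ X0 := by
  constructor
  · rintro ⟨φ, hiff, hred, htrace, hsub⟩
    exact ⟨φ, ⟨fun A B hA hAB hB => (hiff A B hA (hAB.trans hB) (hA.trans hAB) hB).1 hAB,
      fun A hA hAX => ⟨hred A hA hAX, htrace A hA hAX⟩⟩, hsub⟩
  · rintro ⟨φ, ⟨hmono, hgood⟩, hsub⟩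
    refine ⟨φ, fun A B hA hAX hB hBX => ⟨fun hAB => hmono A B hA hAB hBX, fun h => ?_⟩,
      fun A hA hAX => (hgood A hA hAX).1, fun A hA hAX => (hgood A hA hAX).2, hsub⟩
    rw [← (hgood A hA hAX).2, ← (hgood B hB hBX).2]
    exact inter_subset_inter_right h

theorem IsRedXGoodOn.union_subset_apply {φ : Finset V → Finset V} (h : IsRedXGoodOn c X M φ)
    (hM : M ∪ Y0 ⊆ φ M) (hMA : M ⊆ A) (hAX : A ⊆ X) : A ∪ Y0 ⊆ φ A := by
  refine union_subset ?_ (subset_union_right.trans (hM.trans (h.1 M A subset_rfl hMA hAX)))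
  conv_lhs => rw [← (h.2 A hMA hAX).2]
  exact inter_subset_left

def glue (𝓜 : Finset (Finset V)) (ψ : Finset V → Finset V → Finset V) (Y0 A : Finset V) :
    Finset V :=
  A ∪ Y0 ∪ (𝓜.filter (· ⊆ A)).sup fun M => ψ M A

variable {𝓜 : Finset (Finset V)} {ψ : Finset V → Finset V → Finset V}

theorem subset_glue : A ∪ Y0 ⊆ glue 𝓜 ψ Y0 A :=
  subset_union_left

theorem subset_glue_of_mem (hM : M ∈ 𝓜) (hMA : M ⊆ A) : ψ M A ⊆ glue 𝓜 ψ Y0 A :=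
  (le_sup (f := fun M => ψ M A) (mem_filter.2 ⟨hM, hMA⟩)).trans subset_union_right

theorem glue_mono (hψ : ∀ M ∈ 𝓜, ∀ A B, M ⊆ A → A ⊆ B → B ⊆ X → ψ M A ⊆ ψ M B)
    (hAB : A ⊆ B) (hBX : B ⊆ X) : glue 𝓜 ψ Y0 A ⊆ glue 𝓜 ψ Y0 B := by
  refine union_subset ((union_subset_union hAB subset_rfl).trans subset_glue) (Finset.sup_le ?_)
  intro M hM
  obtain ⟨hM, hMA⟩ := mem_filter.1 hM
  exact (hψ M hM A B hMA hAB hBX).trans (subset_glue_of_mem hM (hMA.trans hAB))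

theorem glue_inter (hXY0 : Disjoint X Y0) (hψ : ∀ M ∈ 𝓜, M ⊆ A → ψ M A ∩ X = A)
    (hAX : A ⊆ X) : glue 𝓜 ψ Y0 A ∩ X = A := by
  refine (subset_inter (subset_union_left.trans subset_glue) hAX).antisymm' ?_
  intro x hx
  obtain ⟨hxg, hxX⟩ := mem_inter.1 hx
  rcases mem_union.1 hxg with hx' | hx'
  · rcases mem_union.1 hx' with hxA | hxY0
    · exact hxA
    · exact absurd hxY0 (disjoint_left.1 hXY0 hxX)
  · obtain ⟨M, hM, hxM⟩ := mem_sup.1 hx'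
    obtain ⟨hM, hMA⟩ := mem_filter.1 hM
    exact hψ M hM hMA ▸ mem_inter.2 ⟨hxM, hxX⟩

theorem glue_eq_of_forall_not_subset (h : ∀ M ∈ 𝓜, ¬ M ⊆ A) : glue 𝓜 ψ Y0 A = A ∪ Y0 := by
  simp [glue, filter_eq_empty_iff.2 h]

theorem glue_eq_of_forall_eq (hM0 : M ∈ 𝓜) (hMA : M ⊆ A) (h : ∀ M' ∈ 𝓜, M' ⊆ A → M' = M)
    (hsub : A ∪ Y0 ⊆ ψ M A) : glue 𝓜 ψ Y0 A = ψ M A := by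
  have : 𝓜.filter (· ⊆ A) = {M} :=
    eq_singleton_iff_unique_mem.2 ⟨mem_filter.2 ⟨hM0, hMA⟩,
      fun M' hM' => h M' (mem_filter.1 hM').1 (mem_filter.1 hM').2⟩
  rw [glue, this, sup_singleton, union_eq_right.2 hsub]

theorem Embeddable.exists_isRedXGoodOn_ssubset {Y : Finset V} {y : V} (hd : Disjoint X Y)
    (hMX : M ⊆ X) (hy : y ∈ Y) (hyY0 : y ∉ Y0) (h : Embeddable c X M (insert y Y0)) :
    ∃ ψ, IsRedXGoodOn c X M ψ ∧ M ∪ Y0 ⊂ ψ M := by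
  obtain ⟨ψ, hgood, hsub⟩ := embeddable_iff.1 h
  have hyM : y ∉ M ∪ Y0 := by
    simpa [hyY0] using fun hyM => disjoint_left.1 hd (hMX hyM) hy
  refine ⟨ψ, hgood, (ssubset_iff_of_subset ?_).2 ⟨y, hsub (by simp), hyM⟩⟩
  exact (union_subset_union subset_rfl (subset_insert y Y0)).trans hsub

theorem apply_glue_eq_false (hΛ : NoBlueLambda c) (hXY0 : Disjoint X Y0)
    (h𝓜 : ∀ M, M ∈ 𝓜 ↔ Minimal (fun A => X0 ⊆ A ∧ A ⊆ X ∧ c (A ∪ Y0) = true) M)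
    (hψ : ∀ M ∈ 𝓜, IsRedXGoodOn c X M (ψ M) ∧ M ∪ Y0 ⊂ ψ M M) (hA : X0 ⊆ A) (hAX : A ⊆ X) :
    c (glue 𝓜 ψ Y0 A) = false := by
  by_contra hblue
  rw [Bool.not_eq_false] at hblue
  have hlt : ∀ M ∈ 𝓜, M ⊆ A → M ∪ Y0 ⊂ glue 𝓜 ψ Y0 A := fun M hM hMA =>
    (hψ M hM).2.trans_subset <|
      ((hψ M hM).1.1 M A subset_rfl hMA hAX).trans (subset_glue_of_mem hM hMA)
  -- two minimal blue vertices below the blue vertex `glue 𝓜 ψ Y0 A` would form a blue `Λ`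
  have huniq : ∀ M ∈ 𝓜, ∀ M' ∈ 𝓜, M ⊆ A → M' ⊆ A → M' = M := by
    intro M hM M' hM' hMA hM'A
    have hmin := (h𝓜 M).1 hM
    have hmin' := (h𝓜 M').1 hM'
    rcases hΛ.subset_or_subset hmin.1.2.2 hmin'.1.2.2 hblue (hlt M hM hMA) (hlt M' hM' hM'A)
      with h | h
    · exact (hmin'.eq_of_le hmin.1 <| (hXY0.mono_left hmin.1.2.1).left_le_of_le_sup_right
        (subset_union_left.trans h)).symm
    · exact hmin.eq_of_le hmin'.1 <| (hXY0.mono_left hmin'.1.2.1).left_le_of_le_sup_right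
        (subset_union_left.trans h)
  by_cases hex : ∃ M ∈ 𝓜, M ⊆ A
  · obtain ⟨M, hM, hMA⟩ := hex
    have hgood := (hψ M hM).1
    rw [glue_eq_of_forall_eq hM hMA (fun M' hM' hM'A => huniq M hM M' hM' hMA hM'A)
      (hgood.union_subset_apply (hψ M hM).2.subset hMA hAX)] at hblue
    exact Bool.false_ne_true ((hgood.2 A hMA hAX).1.symm.trans hblue)
  · push Not at hex
    rw [glue_eq_of_forall_not_subset hex] at hblue
    obtain ⟨M, hMA, hM⟩ := exists_minimal_le_of_wellFoundedLT
      (fun A => X0 ⊆ A ∧ A ⊆ X ∧ c (A ∪ Y0) = true) A ⟨hA, hAX, hblue⟩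
    exact hex M ((h𝓜 M).2 hM) hMA

theorem exists_blue_of_not_embeddable {Y : Finset V} (hd : Disjoint X Y) (hΛ : NoBlueLambda c)
    (hY0 : Y0 ⊆ Y) (hne : ¬ Embeddable c X X0 Y0) :
    ∃ X1, X0 ⊆ X1 ∧ X1 ⊆ X ∧ c (X1 ∪ Y0) = true ∧
      ∀ y ∈ Y, y ∉ Y0 → ¬ Embeddable c X X1 (insert y Y0) := by
  classical
  by_contra! hext
  set P : Finset V → Prop := fun A => X0 ⊆ A ∧ A ⊆ X ∧ c (A ∪ Y0) = true
  have hψ : ∀ M, P M → ∃ ψ, IsRedXGoodOn c X M ψ ∧ M ∪ Y0 ⊂ ψ M := by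
    rintro M ⟨hX0M, hMX, hblue⟩
    obtain ⟨y, hy, hyY0, hemb⟩ := hext M hX0M hMX hblue
    exact Embeddable.exists_isRedXGoodOn_ssubset hd hMX hy hyY0 hemb
  choose! ψ hψ using hψ
  set 𝓜 := X.powerset.filter (Minimal P)
  have h𝓜 : ∀ M, M ∈ 𝓜 ↔ Minimal P M := fun M =>
    ⟨fun h => (mem_filter.1 h).2, fun h => mem_filter.2 ⟨mem_powerset.2 h.1.2.1, h⟩⟩
  have hψ𝓜 : ∀ M ∈ 𝓜, IsRedXGoodOn c X M (ψ M) ∧ M ∪ Y0 ⊂ ψ M M :=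
    fun M hM => hψ M ((h𝓜 M).1 hM).1
  have hXY0 : Disjoint X Y0 := hd.mono_right hY0
  refine hne (embeddable_iff.2 ⟨glue 𝓜 ψ Y0, ⟨?_, fun A hA hAX => ⟨?_, ?_⟩⟩, subset_glue⟩)
  · exact fun A B _ hAB hBX => glue_mono (fun M hM => (hψ𝓜 M hM).1.1) hAB hBX
  · exact apply_glue_eq_false hΛ hXY0 h𝓜 hψ𝓜 hA hAX
  · exact glue_inter hXY0 (fun M hM hMA => ((hψ𝓜 M hM).1.2 A hMA hAX).2) hAX

end Embedding

section Shrub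

variable {V : Type*} [DecidableEq V] {X Y : Finset V} {c : Finset V → Bool}
  {P : Finset V → Finset V → Prop} {next : Finset V → Finset V → Finset V}

def IsBlueStep (X Y : Finset V) (c : Finset V → Bool) (P : Finset V → Finset V → Prop)
    (next : Finset V → Finset V → Finset V) : Prop :=
  ∀ X0 Y0, Y0 ⊆ Y → P X0 Y0 →
    X0 ⊆ next X0 Y0 ∧ next X0 Y0 ⊆ X ∧ c (next X0 Y0 ∪ Y0) = true ∧
      ∀ y ∈ Y, y ∉ Y0 → P (next X0 Y0) (insert y Y0)

/-- The `X`-part of the shrub vertex at the ordered subset `R.reverse`; sequences are stored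
reversed so that appending an element is `List.cons`. -/
def treeXPart (next : Finset V → Finset V → Finset V) : List V → Finset V
  | [] => next ∅ ∅
  | y :: R => next (treeXPart next R) (insert y R.toFinset)

theorem IsBlueStep.treeXPart_cons (hstep : IsBlueStep X Y c P next) {y : V} {R : List V}
    (hR : OrdSubset Y (y :: R))
    (hP : ∀ y' ∈ Y, y' ∉ R.toFinset → P (treeXPart next R) (insert y' R.toFinset)) :
    treeXPart next R ⊆ treeXPart next (y :: R) ∧ treeXPart next (y :: R) ⊆ X ∧
      c (treeXPart next (y :: R) ∪ (y :: R).toFinset) = true ∧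
      ∀ y' ∈ Y, y' ∉ (y :: R).toFinset →
        P (treeXPart next (y :: R)) (insert y' (y :: R).toFinset) := by
  have hyR : y ∉ R.toFinset := List.mem_toFinset.not.2 (List.nodup_cons.1 hR.1).1
  have hY := hR.toFinset_subset
  rw [List.toFinset_cons] at hY ⊢
  exact hstep _ _ hY (hP y (hR.2 y List.mem_cons_self) hyR)

theorem IsBlueStep.treeXPart_spec (hstep : IsBlueStep X Y c P next) (h0 : P ∅ ∅) {R : List V}
    (hR : OrdSubset Y R) :
    treeXPart next R ⊆ X ∧ c (treeXPart next R ∪ R.toFinset) = true ∧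
      ∀ y ∈ Y, y ∉ R.toFinset → P (treeXPart next R) (insert y R.toFinset) := by
  induction R with
  | nil => exact (hstep ∅ ∅ (empty_subset Y) h0).2
  | cons y R ih => exact (hstep.treeXPart_cons hR (ih hR.of_cons).2.2).2

theorem IsBlueStep.treeXPart_mono (hstep : IsBlueStep X Y c P next) (h0 : P ∅ ∅)
    {R R' : List V} (hR' : OrdSubset Y R') (h : R <:+ R') :
    treeXPart next R ⊆ treeXPart next R' := by
  obtain ⟨L, rfl⟩ := h
  induction L with
  | nil => exact subset_rfl
  | cons y L ih =>
    exact (ih hR'.of_cons).trans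
      (hstep.treeXPart_cons hR' (hstep.treeXPart_spec h0 hR'.of_cons).2.2).1

theorem IsBlueStep.exists_blue_weakShrubMap (hd : Disjoint X Y)
    (hstep : IsBlueStep X Y c P next) (h0 : P ∅ ∅) :
    ∃ τ : List V → Finset V, IsWeakShrubMap Y τ ∧ ∀ S, OrdSubset Y S → c (τ S) = true := by
  set τ := fun S : List V => treeXPart next S.reverse ∪ S.toFinset
  have htrace : ∀ S, OrdSubset Y S → τ S ∩ Y = S.toFinset := by
    intro S hS
    rw [union_inter_distrib_right, inter_eq_left.2 hS.toFinset_subset,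
      disjoint_iff_inter_eq_empty.1 (hd.mono_left (hstep.treeXPart_spec h0 hS.reverse).1),
      empty_union]
  refine ⟨τ, ⟨fun S T hS hT hST hne => ?_, htrace⟩, fun S hS => ?_⟩
  · have hsub : τ S ⊆ τ T := union_subset_union
      (hstep.treeXPart_mono h0 hT.reverse (List.reverse_suffix.2 hST))
      (fun v hv => List.mem_toFinset.2 (hST.subset (List.mem_toFinset.1 hv)))
    refine ssubset_of_subset_of_ne hsub fun h => hne (hST.eq_of_length ?_)
    rw [← List.toFinset_card_of_nodup hS.1, ← List.toFinset_card_of_nodup hT.1,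
      ← htrace S hS, ← htrace T hT, h]
  · simpa [τ] using (hstep.treeXPart_spec h0 hS.reverse).2.1

end Shrub

theorem statement18_general {V : Type*} [DecidableEq V]
    (X Y : Finset V) (hd : Disjoint X Y)
    (c : Finset V → Bool) (hΛ : NoBlueLambda c)
    (hne : ¬ Embeddable c X ∅ ∅) :
    ∃ τ : List V → Finset V, IsWeakShrubMap Y τ ∧
      ∀ S : List V, OrdSubset Y S → c (τ S) = true := by
  choose! next hnext using fun X0 Y0 (hY0 : Y0 ⊆ Y) (h : ¬ Embeddable c X X0 Y0) =>
    exists_blue_of_not_embeddable hd hΛ hY0 h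
  exact IsBlueStep.exists_blue_weakShrubMap hd hnext hne

/-- Let `X`, `Y` be disjoint sets and let `Q(X ∪ Y)` be blue/red colored with
no blue copy of `Λ`. If the vertex `(∅, ∅)` is not embeddable, then there is a
monochromatic blue weak `Y`-shrub in `Q(X ∪ Y)`. -/
theorem statement18 {V : Type*} [DecidableEq V] [Fintype V]
    (X Y : Finset V) (hd : Disjoint X Y) (hc : X ∪ Y = Finset.univ)
    (c : Finset V → Bool) (hΛ : NoBlueLambda c)
    (hne : ¬ Embeddable c X ∅ ∅) :
    ∃ τ : List V → Finset V, IsWeakShrubMap Y τ ∧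
      ∀ S : List V, OrdSubset Y S → c (τ S) = true :=
  statement18_general X Y hd c hΛ hne
end
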